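/- Fix ε > 0 and define F : ℝ² → ℝ by F(w,v) = (1/2)·(w·(1 + ε·v) − 1)². Then at the point (w,v) = (0, −1/ε): (i) the gradient of F vanishes, ∇F(0,−1/ε) = (0,0); (ii) the Hessian of F equals [[0, −ε],[−ε, 0]], whose eigenvalues are ±ε; and (iii) F(0,−1/ε) = 1/2, whereas the linear predictor w* = 1 achieves F_lin(1) := (1/2)·(1·1 − 1)² = 0. Consequently, for arbitrarily small ε there exist points whose gradient is zero and whose Hessian has operator norm ε, yet whose objective value exceeds that of the best linear predictor by 1/2. -/

import Mathlib

open scoped RealInnerProductSpace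

noncomputable section

/-- The objective `F(w,v) = (1/2)·(w(1+εv) − 1)²` of Example 1 of the paper,
as a function on `ℝ²` (coordinates: `z 0 = w`, `z 1 = v`). -/
def exF (ε : ℝ) (z : EuclideanSpace ℝ (Fin 2)) : ℝ :=
  (1 / 2) * (z 0 * (1 + ε * z 1) - 1) ^ 2

/-- The point `(w,v) = (0, −1/ε)`. -/
def exPt (ε : ℝ) : EuclideanSpace ℝ (Fin 2) :=
  (EuclideanSpace.equiv (Fin 2) ℝ).symm ![0, -1 / ε]

/-- The Hessian matrix of second partial derivatives of `F`. -/
def hessianMatrix {ι : Type} [Fintype ι] [DecidableEq ι] (F : EuclideanSpace ℝ ι → ℝ)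
    (z : EuclideanSpace ℝ ι) : Matrix ι ι ℝ :=
  Matrix.of fun p q =>
    fderiv ℝ (fun v => fderiv ℝ F v (EuclideanSpace.single q 1)) z (EuclideanSpace.single p 1)

/-!
At `(0, −1/ε)` both `w` and `1 + εv` vanish, so both partial derivatives of `F`, namely
`r · (1 + εv)` and `r · εw` with residual `r = w(1 + εv) − 1 = −1`, vanish. Differentiating them
once more, only the derivative of the vanishing factor survives, scaled by `r = −1`; this gives
the Hessian `[[0, −ε], [−ε, 0]]`, with eigenvectors `(1, −1)` and `(1, 1)` for `ε` and `−ε`.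
-/

open Module.End

theorem HasFDerivAt.mul_of_right_eq_zero {𝕜 E : Type*} [NontriviallyNormedField 𝕜]
    [NormedAddCommGroup E] [NormedSpace 𝕜 E] {f g : E → 𝕜} {f' g' : E →L[𝕜] 𝕜} {x : E}
    (hf : HasFDerivAt f f' x) (hg : HasFDerivAt g g' x) (hgx : g x = 0) : HasFDerivAt (fun y => f y * g y) (f x • g') x :=
  (hf.fun_mul hg).congr_fderiv (by ext; simp [hgx])

namespace Matrix

theorem hasEigenvalue_toEuclideanLin_of_mulVec_eq {𝕜 n : Type*} [RCLike 𝕜] [Fintype n]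
    [DecidableEq n] {A : Matrix n n 𝕜} {μ : 𝕜} {v : n → 𝕜} (hv : v ≠ 0) (hAv : A *ᵥ v = μ • v) :
    HasEigenvalue (toEuclideanLin A) μ :=
  hasEigenvalue_of_hasEigenvector (x := WithLp.toLp 2 v)
    ⟨mem_eigenspace_iff.2 (by rw [toLpLin_toLp, toLin'_apply, hAv]; rfl), by simpa using hv⟩

section antidiagonal

variable {𝕜 : Type*} [RCLike 𝕜] (a : 𝕜)

theorem hasEigenvalue_toEuclideanLin_antidiag :
    HasEigenvalue (toEuclideanLin !![0, -a; -a, 0]) a :=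
  hasEigenvalue_toEuclideanLin_of_mulVec_eq (v := ![1, -1]) (by simp)
    (by ext i; fin_cases i <;> simp)

theorem hasEigenvalue_toEuclideanLin_antidiag_neg :
    HasEigenvalue (toEuclideanLin !![0, -a; -a, 0]) (-a) :=
  hasEigenvalue_toEuclideanLin_of_mulVec_eq (v := ![1, 1]) (by simp)
    (by ext i; fin_cases i <;> simp)

end antidiagonal

end Matrix

section exF

open EuclideanSpace

variable (ε : ℝ)

theorem hasFDerivAt_exF_residual (z : EuclideanSpace ℝ (Fin 2)) :
    HasFDerivAt (fun y : EuclideanSpace ℝ (Fin 2) => y 0 * (1 + ε * y 1) - 1)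
      ((1 + ε * z 1) • proj (𝕜 := ℝ) 0 + (z 0 * ε) • proj (𝕜 := ℝ) 1) z := by
  have hw := PiLp.hasFDerivAt_apply (𝕜 := ℝ) 2 z 0
  have hv := PiLp.hasFDerivAt_apply (𝕜 := ℝ) 2 z 1
  refine ((hw.fun_mul ((hv.const_mul ε).const_add 1)).sub_const 1).congr_fderiv ?_
  ext y
  simp only [add_apply, smul_apply, PiLp.proj_apply, smul_eq_mul]
  ring

theorem hasFDerivAt_exF (z : EuclideanSpace ℝ (Fin 2)) :
    HasFDerivAt (exF ε) ((z 0 * (1 + ε * z 1) - 1) •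
      ((1 + ε * z 1) • proj (𝕜 := ℝ) 0 + (z 0 * ε) • proj (𝕜 := ℝ) 1)) z := by
  refine (((hasFDerivAt_exF_residual ε z).pow 2).const_mul (1 / 2)).congr_fderiv ?_
  ext y
  simp only [add_apply, smul_apply, PiLp.proj_apply, smul_eq_mul, nsmul_eq_mul]
  ring

theorem fderiv_exF_single_zero :
    (fun z => fderiv ℝ (exF ε) z (single 0 1)) =
      fun z => (z 0 * (1 + ε * z 1) - 1) * (1 + ε * z 1) := by
  funext z; simp [(hasFDerivAt_exF ε z).fderiv]

theorem fderiv_exF_single_one :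
    (fun z => fderiv ℝ (exF ε) z (single 1 1)) =
      fun z => (z 0 * (1 + ε * z 1) - 1) * (z 0 * ε) := by
  funext z; simp [(hasFDerivAt_exF ε z).fderiv]

theorem exPt_zero : exPt ε 0 = 0 := rfl

theorem one_add_mul_exPt_one (hε : ε ≠ 0) : 1 + ε * exPt ε 1 = 0 := by
  simp [exPt, mul_div_assoc', hε]

theorem exF_exPt (hε : ε ≠ 0) : exF ε (exPt ε) = 1 / 2 := by
  simp [exF, exPt_zero, one_add_mul_exPt_one ε hε]

theorem gradient_exF_exPt (hε : ε ≠ 0) : gradient (exF ε) (exPt ε) = 0 := by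
  refine HasGradientAt.gradient ?_
  rw [hasGradientAt_iff_hasFDerivAt, map_zero]
  simpa [exPt_zero, one_add_mul_exPt_one ε hε] using hasFDerivAt_exF ε (exPt ε)

theorem hessianMatrix_exF_exPt (hε : ε ≠ 0) :
    hessianMatrix (exF ε) (exPt ε) = !![0, -ε; -ε, 0] := by
  have hw := PiLp.hasFDerivAt_apply (𝕜 := ℝ) 2 (exPt ε) 0
  have hv := PiLp.hasFDerivAt_apply (𝕜 := ℝ) 2 (exPt ε) 1
  have h0 := (hasFDerivAt_exF_residual ε (exPt ε)).mul_of_right_eq_zero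
    ((hv.const_mul ε).const_add 1) (one_add_mul_exPt_one ε hε)
  have h1 := (hasFDerivAt_exF_residual ε (exPt ε)).mul_of_right_eq_zero
    (hw.mul_const ε) (by simp [exPt_zero])
  ext p q
  fin_cases p <;> fin_cases q <;>
    simp [hessianMatrix, fderiv_exF_single_zero, fderiv_exF_single_one, h0.fderiv, h1.fderiv,
      exPt_zero]

end exF

/-- Example 1 of the paper: at `(w,v) = (0, −1/ε)` the gradient of
`F(w,v) = (1/2)(w(1+εv)−1)²` vanishes, the Hessian is `[[0,−ε],[−ε,0]]` with eigenvalues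
`±ε`, yet `F(0,−1/ε) = 1/2 > 0 = F_lin(1)`. -/
theorem example_bad_approximate_stationary_point (ε : ℝ) (hε : 0 < ε) :
    gradient (exF ε) (exPt ε) = 0 ∧
      hessianMatrix (exF ε) (exPt ε) = Matrix.of ![![0, -ε], ![-ε, 0]] ∧
      Module.End.HasEigenvalue (Matrix.toEuclideanLin (hessianMatrix (exF ε) (exPt ε))) ε ∧
      Module.End.HasEigenvalue (Matrix.toEuclideanLin (hessianMatrix (exF ε) (exPt ε))) (-ε) ∧
      exF ε (exPt ε) = 1 / 2 ∧
      (1 / 2 : ℝ) * ((1 : ℝ) * 1 - 1) ^ 2 = 0 := by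
  have hH := hessianMatrix_exF_exPt ε hε.ne'
  refine ⟨gradient_exF_exPt ε hε.ne', hH, ?_, ?_, exF_exPt ε hε.ne', by norm_num⟩
  · exact hH ▸ Matrix.hasEigenvalue_toEuclideanLin_antidiag ε
  · exact hH ▸ Matrix.hasEigenvalue_toEuclideanLin_antidiag_neg ε

end
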